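/- arXiv:1810.12540 — 4 statements merged into one kernel-verified Lean document; each statement's English description precedes it below -/
import Mathlib

section
/- Let ρ be a positive semidefinite matrix on ℂ^d ⊗ ℂ^n (indexed by pairs (s,b) with s ∈ Fin d, b ∈ Fin n). Let {P_α}_{α∈A} be a finite family of Hermitian positive semidefinite d×d complex matrices whose real span is the space of all Hermitian d×d matrices, and let {Q_α}_{α∈A} be a dual frame for it. Then ρ admits the bath-positive decomposition ρ = Σ_α Q_α ⊗ η_α, where η_α := Tr_S[(P_α ⊗ 1_n) ρ], and each η_α is positive semidefinite. -/
/-!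
Applying the dual-frame identity `X = ∑ α, Tr (X P_α) • Q_α` to each system block
`ρ_{b b'} = (ρ (s, b) (s', b'))_{s s'}` gives the decomposition, because `Tr (ρ_{b b'} P_α)` is the
`(b, b')` entry of `η_α`. For positivity write `P_α = B* B`; since the partial trace over the system
is cyclic for operators of the form `X ⊗ 1`, `η_α = Tr_S[(B ⊗ 1) ρ (B ⊗ 1)*]`, and the partial trace of
a positive semidefinite matrix is a sum of principal submatrices, hence positive semidefinite.
-/

open Matrix
open scoped Kronecker ComplexOrder

/-- Partial trace over the first (system) factor. -/
noncomputable def trS {d n : ℕ} (M : Matrix (Fin d × Fin n) (Fin d × Fin n) ℂ) :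
    Matrix (Fin n) (Fin n) ℂ :=
  Matrix.of fun b b' => ∑ s : Fin d, M (s, b) (s, b')

section PartialTrace

variable {d n : ℕ}

theorem trS_eq_sum_submatrix (M : Matrix (Fin d × Fin n) (Fin d × Fin n) ℂ) :
    trS M = ∑ s, M.submatrix (Prod.mk s) (Prod.mk s) := by
  ext b b'
  simp [trS, Matrix.sum_apply]

theorem posSemidef_trS {M : Matrix (Fin d × Fin n) (Fin d × Fin n) ℂ} (hM : M.PosSemidef) :
    (trS M).PosSemidef := by
  rw [trS_eq_sum_submatrix]
  exact posSemidef_sum _ fun s _ => hM.submatrix _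

theorem trS_kronecker_one_mul_apply (X : Matrix (Fin d) (Fin d) ℂ)
    (M : Matrix (Fin d × Fin n) (Fin d × Fin n) ℂ) (b b' : Fin n) :
    trS ((X ⊗ₖ (1 : Matrix (Fin n) (Fin n) ℂ)) * M) b b'
      = trace (Matrix.of (fun s s' => M (s, b) (s', b')) * X) := by
  simp only [trS, of_apply, trace, diag_apply, mul_apply, kroneckerMap_apply,
    Fintype.sum_prod_type, one_apply, mul_ite, mul_one, mul_zero, ite_mul, zero_mul,
    Finset.sum_ite_eq, Finset.mem_univ, if_true]
  rw [Finset.sum_comm]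
  simp only [mul_comm]

theorem trS_kronecker_one_mul_comm (X : Matrix (Fin d) (Fin d) ℂ)
    (M : Matrix (Fin d × Fin n) (Fin d × Fin n) ℂ) :
    trS ((X ⊗ₖ (1 : Matrix (Fin n) (Fin n) ℂ)) * M)
      = trS (M * (X ⊗ₖ (1 : Matrix (Fin n) (Fin n) ℂ))) := by
  ext b b'
  simp only [trS, of_apply, mul_apply, kroneckerMap_apply, Fintype.sum_prod_type, one_apply,
    mul_ite, mul_one, mul_zero, ite_mul, zero_mul, Finset.sum_ite_eq,
    Finset.sum_ite_eq', Finset.mem_univ, if_true]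
  rw [Finset.sum_comm]
  simp only [mul_comm]

open scoped MatrixOrder in
theorem posSemidef_trS_kronecker_one_mul {P : Matrix (Fin d) (Fin d) ℂ}
    {M : Matrix (Fin d × Fin n) (Fin d × Fin n) ℂ} (hP : P.PosSemidef) (hM : M.PosSemidef) :
    (trS ((P ⊗ₖ (1 : Matrix (Fin n) (Fin n) ℂ)) * M)).PosSemidef := by
  obtain ⟨B, rfl⟩ := CStarAlgebra.nonneg_iff_eq_star_mul_self.mp hP.nonneg
  have hB1 : (B ⊗ₖ (1 : Matrix (Fin n) (Fin n) ℂ))ᴴ = Bᴴ ⊗ₖ 1 := by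
    rw [conjTranspose_kronecker, conjTranspose_one]
  rw [star_eq_conjTranspose, ← mul_one (1 : Matrix (Fin n) (Fin n) ℂ), mul_kronecker_mul,
    Matrix.mul_assoc, trS_kronecker_one_mul_comm, ← hB1]
  exact posSemidef_trS (hM.mul_mul_conjTranspose_same _)

theorem eq_sum_kronecker_trS_of_reconstruction {A : Type*} [Fintype A]
    {P Q : A → Matrix (Fin d) (Fin d) ℂ}
    (hPQ : ∀ X : Matrix (Fin d) (Fin d) ℂ, X = ∑ α, trace (X * P α) • Q α)
    (M : Matrix (Fin d × Fin n) (Fin d × Fin n) ℂ) :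
    M = ∑ α, Q α ⊗ₖ trS ((P α ⊗ₖ (1 : Matrix (Fin n) (Fin n) ℂ)) * M) := by
  ext ⟨s, b⟩ ⟨s', b'⟩
  have hblock := congrFun₂ (hPQ (Matrix.of fun u v => M (u, b) (v, b'))) s s'
  rw [of_apply] at hblock
  rw [hblock, Matrix.sum_apply, Matrix.sum_apply]
  refine Finset.sum_congr rfl fun α _ => ?_
  rw [Matrix.smul_apply, kroneckerMap_apply, trS_kronecker_one_mul_apply, smul_eq_mul, mul_comm]

end PartialTrace

theorem bath_positive_decomposition_general {d n : ℕ} {A : Type*} [Fintype A]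
    (ρ : Matrix (Fin d × Fin n) (Fin d × Fin n) ℂ) (hρ : ρ.PosSemidef)
    (P Q : A → Matrix (Fin d) (Fin d) ℂ)
    (hPpos : ∀ α, (P α).PosSemidef)
    (hdual : ∀ X : Matrix (Fin d) (Fin d) ℂ,
      X = ∑ α, (Matrix.trace (X * Q α)) • P α ∧
      X = ∑ α, (Matrix.trace (X * P α)) • Q α) :
    ρ = ∑ α, (Q α) ⊗ₖ (trS ((P α ⊗ₖ (1 : Matrix (Fin n) (Fin n) ℂ)) * ρ)) ∧
    ∀ α, (trS ((P α ⊗ₖ (1 : Matrix (Fin n) (Fin n) ℂ)) * ρ)).PosSemidef :=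
  ⟨eq_sum_kronecker_trS_of_reconstruction (fun X => (hdual X).2) ρ,
    fun α => posSemidef_trS_kronecker_one_mul (hPpos α) hρ⟩

/-- Any positive semidefinite `ρ` on `ℂ^d ⊗ ℂ^n` admits the bath-positive decomposition
`ρ = Σ_α Q_α ⊗ η_α` with `η_α := Tr_S[(P_α ⊗ 1_n) ρ]`, and each `η_α` is positive
semidefinite.  Here `{P_α}` is a frame of Hermitian positive semidefinite matrices whose real
span is all Hermitian matrices, and `{Q_α}` is a dual frame. -/
theorem bath_positive_decomposition {d n : ℕ} {A : Type*} [Fintype A]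
    (ρ : Matrix (Fin d × Fin n) (Fin d × Fin n) ℂ) (hρ : ρ.PosSemidef)
    (P Q : A → Matrix (Fin d) (Fin d) ℂ)
    (hPherm : ∀ α, (P α).IsHermitian)
    (hPpos : ∀ α, (P α).PosSemidef)
    (hPspan : ∀ X : Matrix (Fin d) (Fin d) ℂ, X.IsHermitian →
      ∃ c : A → ℝ, X = ∑ α, (c α : ℂ) • P α)
    (hQherm : ∀ α, (Q α).IsHermitian)
    (hdual : ∀ X : Matrix (Fin d) (Fin d) ℂ,
      X = ∑ α, (Matrix.trace (X * Q α)) • P α ∧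
      X = ∑ α, (Matrix.trace (X * P α)) • Q α) :
    ρ = ∑ α, (Q α) ⊗ₖ (trS ((P α ⊗ₖ (1 : Matrix (Fin n) (Fin n) ℂ)) * ρ)) ∧
    ∀ α, (trS ((P α ⊗ₖ (1 : Matrix (Fin n) (Fin n) ℂ)) * ρ)).PosSemidef :=
  bath_positive_decomposition_general ρ hρ P Q hPpos hdual
end

section
/- Let {P_α}_{α=1,…,d²} be a linearly independent family of Hermitian positive semidefinite d×d complex matrices with Σ_α P_α = 1_d, such that Tr(P_α²) = a for all α and Tr(P_α P_β) = c for all α ≠ β (a general SIC-POVM). Then Tr(P_α) = 1/d for all α, c = (1 − a d)/(d(d² − 1)), a d³ > 1, and the matrices Q_α := (d/(a d³ − 1))·[(d² − 1)·P_α − (1 − a d)·1_d] satisfy the biorthogonality relation Tr(P_α Q_β) = δ_{αβ}; consequently {Q_α} is the dual frame of {P_α}. -/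
open Matrix
open scoped ComplexOrder

/-!
Multiplying `∑ β, P β = 1` by `P α` and taking traces gives `Tr P_α = a + (d² - 1) c`; summing
over `α` gives `d² (a + (d² - 1) c) = d`, whence `Tr P_α = 1/d` and the formula for `c`.
Linear independence makes `P_α - P_β ≠ 0` for `α ≠ β`, so `0 < Tr((P_α - P_β)²) = 2 (a - c)`,
and `a d³ - 1 = (d³ - d)(a - c) > 0`. Biorthogonality is then a direct computation from the
values of `Tr(P_α P_β)` and `Tr P_α`.
-/

namespace Matrix

theorem trace_conjTranspose_mul_self_pos {R m n : Type*} [Fintype m] [Fintype n] [CommRing R]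
    [PartialOrder R] [StarRing R] [StarOrderedRing R] [NoZeroDivisors R] {A : Matrix m n R}
    (hA : A ≠ 0) : 0 < (Aᴴ * A).trace :=
  (posSemidef_conjTranspose_mul_self A).trace_nonneg.lt_of_ne
    (Ne.symm (mt trace_conjTranspose_mul_self_eq_zero_iff.mp hA))

theorem trace_mul_smul_sub_smul_one {n : Type*} [Fintype n] [DecidableEq n]
    {A B : Matrix n n ℂ} {k m s t r : ℝ} (hA : trace A = t) (hAB : trace (A * B) = r) :
    trace (A * (k • (m • B - s • 1))) = ((k * (m * r - s * t) : ℝ) : ℂ) := by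
  simp only [Matrix.mul_smul, Matrix.mul_sub, Matrix.mul_one, trace_smul, trace_sub, hA, hAB,
    Complex.real_smul]
  push_cast
  ring

section GramConstant

variable {R ι n : Type*} [CommRing R] [Fintype n] {P : ι → Matrix n n R} {a c : R}

theorem trace_eq_of_sum_eq_one [Fintype ι] [DecidableEq ι] [DecidableEq n] (hsum : ∑ i, P i = 1)
    (ha : ∀ i, trace (P i * P i) = a) (hc : ∀ i j, i ≠ j → trace (P i * P j) = c) (i : ι) :
    trace (P i) = a + (Fintype.card ι - 1) * c := by
  calc trace (P i) = ∑ j, trace (P i * P j) := by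
        rw [← trace_sum, ← Finset.mul_sum, hsum, mul_one]
    _ = a + ∑ j ∈ {i}ᶜ, c := by
        rw [Fintype.sum_eq_add_sum_compl i, ha]
        exact congrArg _ (Finset.sum_congr rfl fun j hj ↦ hc i j (Ne.symm (by simpa using hj)))
    _ = a + (Fintype.card ι - 1) * c := by
        rw [Finset.sum_const, Finset.card_compl, Finset.card_singleton, nsmul_eq_mul,
          Nat.cast_pred (Fintype.card_pos_iff.mpr ⟨i⟩)]

theorem card_mul_trace_eq_card [Fintype ι] [DecidableEq ι] [DecidableEq n] (hsum : ∑ i, P i = 1)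
    (ha : ∀ i, trace (P i * P i) = a) (hc : ∀ i j, i ≠ j → trace (P i * P j) = c) :
    (Fintype.card ι : R) * (a + (Fintype.card ι - 1) * c) = Fintype.card n := by
  calc (Fintype.card ι : R) * (a + (Fintype.card ι - 1) * c) = ∑ i, trace (P i) := by
        simp only [trace_eq_of_sum_eq_one hsum ha hc, Finset.sum_const, Finset.card_univ,
          nsmul_eq_mul]
    _ = Fintype.card n := by rw [← trace_sum, hsum, trace_one]

theorem trace_sub_mul_sub_eq (ha : ∀ i, trace (P i * P i) = a)
    (hc : ∀ i j, i ≠ j → trace (P i * P j) = c) {i j : ι} (hij : i ≠ j) :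
    trace ((P i - P j) * (P i - P j)) = 2 * (a - c) := by
  simp only [sub_mul, mul_sub, trace_sub, ha, hc i j hij, hc j i hij.symm]
  ring

end GramConstant

theorem lt_of_isHermitian_of_trace_mul_eq {ι n : Type*} [Nontrivial ι] [Fintype n]
    {P : ι → Matrix n n ℂ} (hP : ∀ i, (P i).IsHermitian) (hinj : Function.Injective P) {a c : ℝ}
    (ha : ∀ i, trace (P i * P i) = a) (hc : ∀ i j, i ≠ j → trace (P i * P j) = c) : c < a := by
  obtain ⟨i, j, hij⟩ := exists_pair_ne ι
  have h := trace_conjTranspose_mul_self_pos (sub_ne_zero.mpr (hinj.ne hij))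
  rw [((hP i).sub (hP j)).eq, trace_sub_mul_sub_eq ha hc hij] at h
  have h' : (0 : ℝ) < 2 * (a - c) := by exact_mod_cast h
  linarith

end Matrix

/-- For a general SIC-POVM `{P_α}` in dimension `d ≥ 2` (a linearly independent family of `d²`
Hermitian positive semidefinite matrices summing to the identity with `Tr(P_α²) = a` and
`Tr(P_α P_β) = c` for `α ≠ β`): every element has trace `1/d`, `c = (1 - a d)/(d (d² - 1))`,
`a d³ > 1`, and the matrices `Q_α = (d/(a d³ - 1)) [(d² - 1) P_α - (1 - a d) 1_d]` are
biorthogonal to the `P_α`, hence form the dual frame. -/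
theorem sic_povm_dual_frame {d : ℕ} (hd : 2 ≤ d)
    (P : Fin (d ^ 2) → Matrix (Fin d) (Fin d) ℂ)
    (hPlin : LinearIndependent ℝ P)
    (hPpos : ∀ α, (P α).PosSemidef)
    (hPsum : ∑ α, P α = (1 : Matrix (Fin d) (Fin d) ℂ))
    (a c : ℝ)
    (ha : ∀ α, Matrix.trace (P α * P α) = (a : ℂ))
    (hc : ∀ α β, α ≠ β → Matrix.trace (P α * P β) = (c : ℂ)) :
    (∀ α, Matrix.trace (P α) = ((1 / d : ℝ) : ℂ)) ∧
    c = (1 - a * d) / (d * ((d : ℝ) ^ 2 - 1)) ∧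
    1 < a * (d : ℝ) ^ 3 ∧
    (∀ α β, Matrix.trace (P α *
        (((d : ℝ) / (a * (d : ℝ) ^ 3 - 1)) •
          ((((d : ℝ) ^ 2 - 1) • P β) -
            ((1 - a * (d : ℝ)) • (1 : Matrix (Fin d) (Fin d) ℂ)))))
      = if α = β then 1 else 0) := by
  have hd2 : (2 : ℝ) ≤ d := by exact_mod_cast hd
  have hd0 : (d : ℝ) ≠ 0 := by positivity
  have hT : (d : ℝ) * (a + ((d : ℝ) ^ 2 - 1) * c) = 1 := by
    have h : (d : ℝ) ^ 2 * (a + ((d : ℝ) ^ 2 - 1) * c) = d := by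
      have h := card_mul_trace_eq_card hPsum ha hc
      simp only [Fintype.card_fin] at h
      exact_mod_cast h
    exact mul_left_cancel₀ hd0 (by linear_combination h)
  have htrace : ∀ α, trace (P α) = ((1 / d : ℝ) : ℂ) := fun α ↦ by
    rw [trace_eq_of_sum_eq_one hPsum ha hc α, ← eq_one_div_of_mul_eq_one_right hT]
    simp
  have hca : c < a := by
    have : Nontrivial (Fin (d ^ 2)) := Fin.nontrivial_iff_two_le.mpr (by nlinarith)
    exact lt_of_isHermitian_of_trace_mul_eq (fun α ↦ (hPpos α).isHermitian) hPlin.injective ha hc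
  have had : 1 < a * (d : ℝ) ^ 3 := by
    have h : a * (d : ℝ) ^ 3 - 1 = ((d : ℝ) ^ 3 - d) * (a - c) := by linear_combination hT
    nlinarith [mul_pos (by nlinarith : (0 : ℝ) < (d : ℝ) ^ 3 - d) (sub_pos.mpr hca)]
  refine ⟨htrace, ?_, had, fun α β ↦ ?_⟩
  · rw [eq_div_iff (mul_ne_zero hd0 (by nlinarith))]
    linear_combination hT
  split_ifs with hαβ
  · rw [hαβ, trace_mul_smul_sub_smul_one (htrace β) (ha β), ← Complex.ofReal_one]
    congr 1
    rw [div_mul_eq_mul_div, div_eq_one_iff_eq (by linarith)]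
    field_simp
    ring
  · rw [trace_mul_smul_sub_smul_one (htrace α) (hc α β hαβ), ← Complex.ofReal_zero]
    exact congrArg _ (mul_eq_zero_of_right _ (by field_simp; linear_combination hT))
end

section
/- Let Ψ = Σ_{s=1}^{d} a_s (e_s ⊗ χ_s) ∈ ℂ^d ⊗ ℂ^n be a pure state of full Schmidt rank d, i.e., a_s > 0 for all s, {e_s} is an orthonormal basis of ℂ^d, and {χ_s} is an orthonormal family in ℂ^n. Suppose the rank-one projector |Ψ⟩⟨Ψ| admits a decomposition |Ψ⟩⟨Ψ| = Σ_{α∈A} w_α Q_α ⊗ ρ_α for some finite family of d×d matrices {Q_α}, real weights {w_α}, and n×n matrices {ρ_α}. Then the complex span of the family {w_α ρ_α : α ∈ A} has dimension at least d². In particular, any bath-positive decomposition of a full-Schmidt-rank pure state requires at least d² linearly independent bath operators. -/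
open Matrix
open scoped Kronecker ComplexOrder ComplexConjugate

/-!
Let `E` and `X` be the matrices whose columns are the Schmidt vectors `e_s` and `χ_s`, and
`D = diag(a)`, so that `Ψ = vec (X D Eᵀ) = (E ⊗ X) vec D`. As `E ⊗ X` is an isometry, compressing
the decomposition by it turns `|Ψ⟩⟨Ψ|` into `|vec D⟩⟨vec D|` and each bath operator `ρ` into
`Xᴴ ρ X`. The `(s, s')` block of `|vec D⟩⟨vec D|` is `a_s a_{s'}` times a matrix unit, while every
block of a sum of Kronecker products lies in the span of the right-hand factors. Hence the
compressed bath operators span all `d × d` matrices, and compression cannot increase the dimension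
of a span.
-/

namespace Matrix

variable {l m n o p ι ι' κ κ' A R K : Type*}

theorem conjTranspose_transpose_mul_transpose_eq_one [Fintype n] [DecidableEq m]
    [NonAssocSemiring R] [StarRing R] (v : m → n → R)
    (hv : ∀ i j, ∑ k, star (v i k) * v j k = if i = j then 1 else 0) :
    (of v)ᵀᴴ * (of v)ᵀ = 1 := by
  ext i j
  simpa [mul_apply, one_apply] using hv i j

theorem conjTranspose_mul_vecMulVec_star_mul [Fintype m] [CommSemiring R] [StarRing R]
    (B : Matrix m n R) (x : m → R) :
    Bᴴ * vecMulVec x (star x) * B = vecMulVec (Bᴴ *ᵥ x) (star (Bᴴ *ᵥ x)) := by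
  rw [mul_vecMulVec, vecMulVec_mul, star_mulVec, conjTranspose_conjTranspose]

theorem conjTranspose_kronecker_mul_kronecker_mul [Fintype m] [Fintype n] [Fintype ι]
    [Fintype κ] [CommSemiring R] [StarRing R] (U : Matrix m ι R) (V : Matrix n κ R)
    (Q : Matrix m m R) (ρ : Matrix n n R) :
    (U ⊗ₖ V)ᴴ * (Q ⊗ₖ ρ) * (U ⊗ₖ V) = (Uᴴ * Q * U) ⊗ₖ (Vᴴ * ρ * V) := by
  rw [conjTranspose_kronecker, ← mul_kronecker_mul, ← mul_kronecker_mul]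

theorem conjTranspose_kronecker_mul_vecMulVec_vec_mul [Fintype l] [Fintype m] [Fintype n]
    [Fintype p] [DecidableEq m] [DecidableEq n] [CommSemiring R] [StarRing R]
    {U : Matrix p n R} {V : Matrix l m R} (hU : Uᴴ * U = 1) (hV : Vᴴ * V = 1)
    (M : Matrix m n R) :
    (U ⊗ₖ V)ᴴ * vecMulVec (vec (V * M * Uᵀ)) (star (vec (V * M * Uᵀ))) * (U ⊗ₖ V) =
      vecMulVec (vec M) (star (vec M)) := by
  rw [← kronecker_mulVec_vec, conjTranspose_mul_vecMulVec_star_mul, mulVec_mulVec,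
    conjTranspose_kronecker, ← mul_kronecker_mul, hU, hV, one_kronecker_one, one_mulVec]

theorem vec_transpose_of_mul_diagonal_mul_of [Fintype ι] [DecidableEq ι] [CommSemiring R]
    (a : ι → R) (e : ι → m → R) (χ : ι → n → R) :
    vec ((of χ)ᵀ * diagonal a * of e) = fun p => ∑ s, a s * e s p.1 * χ s p.2 := by
  ext ⟨i, b⟩
  simp only [vec, mul_apply, diagonal_apply, transpose_apply, of_apply, mul_ite, mul_zero,
    Finset.sum_ite_eq', Finset.mem_univ, if_true]
  exact Finset.sum_congr rfl fun s _ => by ring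

theorem of_vecMulVec_vec_diagonal_apply [DecidableEq ι] [Semiring R] [StarRing R] (a : ι → R)
    (s s' : ι) :
    of (fun t t' => vecMulVec (vec (diagonal a)) (star (vec (diagonal a))) (s, t) (s', t')) =
      single s s' (a s * star (a s')) := by
  ext t t'
  simp only [of_apply, vecMulVec_apply, vec, Pi.star_apply, diagonal_apply, single_apply]
  split_ifs <;> simp_all

theorem kronecker_sum_slice_mem_span [Fintype A] [CommSemiring R] (Q : A → Matrix ι ι' R)
    (ρ : A → Matrix κ κ' R) (i : ι) (i' : ι') :
    of (fun k k' => (∑ α, Q α ⊗ₖ ρ α) (i, k) (i', k')) ∈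
      Submodule.span R (Set.range ρ) := by
  have hslice : of (fun k k' => (∑ α, Q α ⊗ₖ ρ α) (i, k) (i', k')) = ∑ α, Q α i i' • ρ α := by
    ext k k'
    simp [sum_apply]
  rw [hslice]
  exact Submodule.sum_mem _ fun α _ => Submodule.smul_mem _ _ (Submodule.subset_span ⟨α, rfl⟩)

theorem submodule_eq_top_of_single_mem [Fintype m] [Fintype n] [DecidableEq m] [DecidableEq n]
    [Field K] (S : Submodule K (Matrix m n K)) (c : m → n → K) (hc : ∀ i j, c i j ≠ 0)
    (h : ∀ i j, single i j (c i j) ∈ S) : S = ⊤ := by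
  refine Submodule.eq_top_iff'.2 fun M => ?_
  rw [matrix_eq_sum_single M]
  refine Submodule.sum_mem _ fun i _ => Submodule.sum_mem _ fun j _ => ?_
  have hrescale : single i j (M i j) = (M i j / c i j) • single i j (c i j) := by
    rw [smul_single, smul_eq_mul, div_mul_cancel₀ _ (hc i j)]
  rw [hrescale]
  exact Submodule.smul_mem _ _ (h i j)

theorem finrank_span_range_mul_mul_le [Fintype m] [Fintype n] [Field K]
    (B : Matrix l m K) (C : Matrix n o K) (g : A → Matrix m n K) :
    Module.finrank K (Submodule.span K (Set.range fun α => B * g α * C)) ≤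
      Module.finrank K (Submodule.span K (Set.range g)) := by
  let f := mulLeftLinearMap o K B ∘ₗ mulRightLinearMap m K C
  have himage : (Set.range fun α => B * g α * C) = f '' Set.range g := by
    rw [← Set.range_comp]
    simp [f, Function.comp_def, Matrix.mul_assoc]
  rw [himage, ← Submodule.map_span]
  exact Submodule.finrank_map_le _ _

end Matrix

/-- Any decomposition `|Ψ⟩⟨Ψ| = Σ_α w_α Q_α ⊗ ρ_α` of a pure state of full Schmidt rank `d`
requires at least `d²` linearly independent bath operators: the complex span of
`{w_α ρ_α}` has dimension at least `d²`. -/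
theorem schmidt_rank_d_needs_d_sq_bath_operators {d n : ℕ} {A : Type*} [Fintype A]
    (a : Fin d → ℝ) (ha : ∀ s, 0 < a s)
    (e : Fin d → Fin d → ℂ) (χ : Fin d → Fin n → ℂ)
    (he : ∀ s s', ∑ i, conj (e s i) * e s' i = if s = s' then 1 else 0)
    (hχ : ∀ s s', ∑ b, conj (χ s b) * χ s' b = if s = s' then 1 else 0)
    (w : A → ℝ) (Q : A → Matrix (Fin d) (Fin d) ℂ)
    (ρB : A → Matrix (Fin n) (Fin n) ℂ)
    (hdec : (Matrix.of fun p q : Fin d × Fin n =>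
        (∑ s, (a s : ℂ) * e s p.1 * χ s p.2) *
          conj (∑ s, (a s : ℂ) * e s q.1 * χ s q.2))
      = ∑ α, (w α : ℂ) • (Q α ⊗ₖ ρB α)) :
    d ^ 2 ≤ Module.finrank ℂ
      ↥(Submodule.span ℂ (Set.range fun α => (w α : ℂ) • ρB α)) := by
  set E := (of e)ᵀ
  set X := (of χ)ᵀ
  set D := diagonal fun s => (a s : ℂ)
  have hE : Eᴴ * E = 1 := conjTranspose_transpose_mul_transpose_eq_one e he
  have hX : Xᴴ * X = 1 := conjTranspose_transpose_mul_transpose_eq_one χ hχ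
  have hpure : vecMulVec (vec (X * D * Eᵀ)) (star (vec (X * D * Eᵀ))) =
      ∑ α, (w α : ℂ) • (Q α ⊗ₖ ρB α) := by
    rw [transpose_transpose, vec_transpose_of_mul_diagonal_mul_of]
    exact hdec
  have hcompress : vecMulVec (vec D) (star (vec D)) =
      ∑ α, (Eᴴ * Q α * E) ⊗ₖ (Xᴴ * ((w α : ℂ) • ρB α) * X) := by
    rw [← conjTranspose_kronecker_mul_vecMulVec_vec_mul hE hX, hpure]
    simp only [Matrix.mul_sum, Matrix.sum_mul, ← kronecker_smul,
      conjTranspose_kronecker_mul_kronecker_mul]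
  have hsingle : ∀ s s', single s s' ((a s : ℂ) * star (a s' : ℂ)) ∈
      Submodule.span ℂ (Set.range fun α => Xᴴ * ((w α : ℂ) • ρB α) * X) := fun s s' => by
    simpa only [← hcompress, D, of_vecMulVec_vec_diagonal_apply] using
      kronecker_sum_slice_mem_span (fun α => Eᴴ * Q α * E)
        (fun α => Xᴴ * ((w α : ℂ) • ρB α) * X) s s'
  have htop := submodule_eq_top_of_single_mem _ _
    (fun s s' => by simp [(ha s).ne', (ha s').ne']) hsingle
  have hle := finrank_span_range_mul_mul_le Xᴴ X fun α => (w α : ℂ) • ρB α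
  rw [htop, finrank_top, Module.finrank_matrix] at hle
  simpa [sq] using hle
end

section
/- (Theorem 1, identity form.) Let ρ be a positive semidefinite matrix on ℂ^d ⊗ ℂ^n with bath-positive decomposition ρ = Σ_α w_α Q_α ⊗ ρ_α relative to a linearly independent spanning family {P_α} of d×d Hermitian positive semidefinite matrices with dual frame {Q_α}, where w_α ≥ 0 and each ρ_α is a density matrix on ℂ^n. Let ℛ : Matrix d d ℂ → Matrix d d ℂ be any linear map, and let ℛ ⊗ I_B denote the unique linear map on matrices over ℂ^d ⊗ ℂ^n satisfying (ℛ ⊗ I_B)(A ⊗ B) = ℛ(A) ⊗ B for all A, B. Define R_{αα'} := Tr(ℛ(Q_α) P_{α'}). Then (ℛ ⊗ I_B)(ρ) = Σ_{α,α'} w_α R_{αα'} · Q_{α'} ⊗ ρ_α, and consequently for every unitary U on ℂ^d ⊗ ℂ^n, Tr_B[U ((ℛ ⊗ I_B)(ρ)) U†] = Σ_{α,α'} w_α R_{αα'} · φ_U^{(α)}(Q_{α'}), where φ_U^{(α)}(X) := Tr_B[U (X ⊗ ρ_α) U†]. Hence the same set of maps {φ_U^{(α)}} determines the reduced dynamics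 of every state obtained from ρ by a local system operation. -/
open Matrix
open scoped Kronecker ComplexOrder

/-- Partial trace over the second (bath) factor. -/
noncomputable def trB {d n : ℕ} (M : Matrix (Fin d × Fin n) (Fin d × Fin n) ℂ) :
    Matrix (Fin d) (Fin d) ℂ :=
  Matrix.of fun s s' => ∑ b : Fin n, M (s, b) (s', b)

lemma trB_sum {d n : ℕ} {ι : Type*} (s : Finset ι)
    (f : ι → Matrix (Fin d × Fin n) (Fin d × Fin n) ℂ) :
    trB (∑ i ∈ s, f i) = ∑ i ∈ s, trB (f i) := by
  ext a b
  simp only [trB, Matrix.sum_apply, Matrix.of_apply]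
  rw [Finset.sum_comm]

lemma trB_smul {d n : ℕ} (c : ℂ) (M : Matrix (Fin d × Fin n) (Fin d × Fin n) ℂ) :
    trB (c • M) = c • trB M := by
  ext a b
  simp [trB, Finset.mul_sum]

lemma sum_kron {d n : ℕ} {ι : Type*} (s : Finset ι)
    (f : ι → Matrix (Fin d) (Fin d) ℂ) (B : Matrix (Fin n) (Fin n) ℂ) :
    (∑ i ∈ s, f i) ⊗ₖ B = ∑ i ∈ s, (f i) ⊗ₖ B := by
  ext ⟨a, b⟩ ⟨a', b'⟩
  simp [Matrix.kroneckerMap_apply, Matrix.sum_apply, Finset.sum_mul]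

/-- Theorem 1, identity form.  Given a bath-positive decomposition
`ρ = Σ_α w_α Q_α ⊗ ρ_α` relative to a linearly independent spanning family `{P_α}` of
Hermitian positive semidefinite matrices with dual frame `{Q_α}`, any local system operation
`ℛ` (extended as `ℛ ⊗ I_B`) satisfies
`(ℛ ⊗ I_B)(ρ) = Σ_{α,α'} w_α R_{αα'} Q_{α'} ⊗ ρ_α` with `R_{αα'} = Tr(ℛ(Q_α) P_{α'})`, and
hence for every unitary `U`,
`Tr_B[U ((ℛ ⊗ I_B)(ρ)) U†] = Σ_{α,α'} w_α R_{αα'} φ_U^{(α)}(Q_{α'})` where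
`φ_U^{(α)}(X) = Tr_B[U (X ⊗ ρ_α) U†]`. -/
theorem local_operation_same_maps {d n : ℕ} {A : Type*} [Fintype A]
    (P Q : A → Matrix (Fin d) (Fin d) ℂ)
    (hPlin : LinearIndependent ℝ P)
    (hPpos : ∀ α, (P α).PosSemidef)
    (hPspan : ∀ X : Matrix (Fin d) (Fin d) ℂ, X.IsHermitian →
      ∃ c : A → ℝ, X = ∑ α, (c α : ℂ) • P α)
    (hQherm : ∀ α, (Q α).IsHermitian)
    (hQdual : ∀ X : Matrix (Fin d) (Fin d) ℂ,
      X = ∑ α, Matrix.trace (X * Q α) • P α ∧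
      X = ∑ α, Matrix.trace (X * P α) • Q α)
    (ρ : Matrix (Fin d × Fin n) (Fin d × Fin n) ℂ) (hρ : ρ.PosSemidef)
    (w : A → ℝ) (hw : ∀ α, 0 ≤ w α)
    (ρB : A → Matrix (Fin n) (Fin n) ℂ)
    (hρB : ∀ α, (ρB α).PosSemidef ∧ (ρB α).trace = 1)
    (hdec : ρ = ∑ α, (w α : ℂ) • ((Q α) ⊗ₖ (ρB α)))
    (R : Matrix (Fin d) (Fin d) ℂ →ₗ[ℂ] Matrix (Fin d) (Fin d) ℂ)
    (RB : Matrix (Fin d × Fin n) (Fin d × Fin n) ℂ →ₗ[ℂ]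
      Matrix (Fin d × Fin n) (Fin d × Fin n) ℂ)
    (hRB : ∀ (X : Matrix (Fin d) (Fin d) ℂ) (Y : Matrix (Fin n) (Fin n) ℂ),
      RB (X ⊗ₖ Y) = (R X) ⊗ₖ Y) :
    RB ρ = ∑ α, ∑ α', ((w α : ℂ) * Matrix.trace (R (Q α) * P α')) •
        ((Q α') ⊗ₖ (ρB α)) ∧
    ∀ U ∈ Matrix.unitaryGroup (Fin d × Fin n) ℂ,
      trB (U * RB ρ * Uᴴ)
        = ∑ α, ∑ α', ((w α : ℂ) * Matrix.trace (R (Q α) * P α')) •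
            trB (U * ((Q α') ⊗ₖ (ρB α)) * Uᴴ) := by
  have h1 : RB ρ = ∑ α, ∑ α', ((w α : ℂ) * Matrix.trace (R (Q α) * P α')) •
      ((Q α') ⊗ₖ (ρB α)) := by
    rw [hdec, map_sum]
    refine Finset.sum_congr rfl fun α _ => ?_
    rw [_root_.map_smul, hRB]
    conv_lhs => rw [(hQdual (R (Q α))).2]
    rw [sum_kron, Finset.smul_sum]
    refine Finset.sum_congr rfl fun α' _ => ?_
    rw [Matrix.smul_kronecker, smul_smul]
  refine ⟨h1, fun U _ => ?_⟩
  rw [h1]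
  rw [Finset.mul_sum, Finset.sum_mul, trB_sum]
  refine Finset.sum_congr rfl fun α _ => ?_
  rw [Finset.mul_sum, Finset.sum_mul, trB_sum]
  refine Finset.sum_congr rfl fun α' _ => ?_
  rw [Matrix.mul_smul, Matrix.smul_mul, trB_smul]
end
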